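/- For every side-information digraph G with at most 4 vertices, ℓ*(G) = mais(G) = minrank(G). -/

import Mathlib

/-- `ε` is a (zero-error) index code for the side-information digraph `G` on `Fin n`:
each receiver `i` can decode `x i` from the codeword and its side information
`{x j : G i j}`. Messages and code symbols are bits, modeled as `ZMod 2`. -/
def IsIndexCode {n ℓ : ℕ} (G : Fin n → Fin n → Prop)
    (ε : (Fin n → ZMod 2) → (Fin ℓ → ZMod 2)) : Prop :=
  ∀ i : Fin n, ∃ δ : (Fin ℓ → ZMod 2) → ({j : Fin n // G i j} → ZMod 2) → ZMod 2,
    ∀ x : Fin n → ZMod 2, δ (ε x) (fun j => x j.1) = x i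

/-- The optimal index codelength `ℓ*(G)`. -/
noncomputable def optLen {n : ℕ} (G : Fin n → Fin n → Prop) : ℕ :=
  sInf {ℓ : ℕ | ∃ ε : (Fin n → ZMod 2) → (Fin ℓ → ZMod 2), IsIndexCode G ε}

/-- The subgraph of `G` induced on the vertex set `S` has no directed cycle. -/
def AcyclicOn {n : ℕ} (G : Fin n → Fin n → Prop) (S : Finset (Fin n)) : Prop :=
  ∀ i : Fin n, ¬ Relation.TransGen (fun a b => G a b ∧ a ∈ S ∧ b ∈ S) i i

/-- `mais G`: the order of a maximum acyclic induced subgraph of `G`. -/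
noncomputable def mais {n : ℕ} (G : Fin n → Fin n → Prop) : ℕ :=
  sSup {k : ℕ | ∃ S : Finset (Fin n), S.card = k ∧ AcyclicOn G S}

/-- `minrank G`: the minimum rank over `GF(2)` of a matrix fitting `G`
(ones on the diagonal, zero at off-diagonal non-arcs). -/
noncomputable def minrank {n : ℕ} (G : Fin n → Fin n → Prop) : ℕ :=
  sInf {r : ℕ | ∃ M : Matrix (Fin n) (Fin n) (ZMod 2),
    (∀ i, M i i = 1) ∧ (∀ i j, i ≠ j → ¬ G i j → M i j = 0) ∧ M.rank = r}

/-- `G` contains an undirected cycle of length `k` (`k ≥ 3`): `k` distinct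
vertices, cyclically arranged, with consecutive ones joined by edges
(arcs in both directions). -/
def HasUndirCycleLen {n : ℕ} (G : Fin n → Fin n → Prop) (k : ℕ) : Prop :=
  3 ≤ k ∧ ∃ v : ZMod k → Fin n, Function.Injective v ∧
    ∀ t : ZMod k, G (v t) (v (t + 1)) ∧ G (v (t + 1)) (v t)

/-- The set of edges of `G`, each edge `i - j` (both arcs present) recorded as
the unordered pair `{i, j}`. -/
def edgeSet {n : ℕ} (G : Fin n → Fin n → Prop) : Set (Finset (Fin n)) :=
  {e | ∃ i j : Fin n, i ≠ j ∧ G i j ∧ G j i ∧ e = ({i, j} : Finset (Fin n))}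

/-!
The inequalities `mais ≤ ℓ* ≤ minrank` hold for every digraph. Two messages supported on an
acyclic set `S` with the same codeword would be told apart by the receiver at a sink of the set
where they differ, so a code has at least `2 ^ #S` codewords. A fitting matrix `M = A * B` of
rank `r` gives the linear code `x ↦ B *ᵥ x`, from which receiver `i` reads
`(M *ᵥ x) i = x i + (terms in its side information)`.

For `minrank ≤ mais` on at most four vertices: a digraph with a directed cycle has
`minrank ≤ n - 1`, since the indicator of the vertices lying on cycles is in the kernel of
`1 + (successor matrix)`; this settles `mais ≥ n - 1`. If `mais = 1` every pair is a digon and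
the all-ones matrix fits. In the remaining case `n = 4`, `mais = 2`, every triple carries a digon
or a directed triangle. Two disjoint digons or a triangle of digons give a cover by two cliques;
otherwise all digons pass through one hub vertex, the other three vertices span a directed
triangle, and a rank-two matrix is written down according to the digons at the hub.
-/

open Finset Matrix

section

variable {n : ℕ} {G : Fin n → Fin n → Prop}

def Fits (G : Fin n → Fin n → Prop) (M : Matrix (Fin n) (Fin n) (ZMod 2)) : Prop :=
  (∀ i, M i i = 1) ∧ ∀ i j, i ≠ j → ¬ G i j → M i j = 0

abbrev Digon (G : Fin n → Fin n → Prop) (x y : Fin n) : Prop := G x y ∧ G y x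

lemma Digon.ne (hG : ∀ i, ¬ G i i) {a b : Fin n} (h : Digon G a b) : a ≠ b := by
  rintro rfl
  exact hG a h.1

lemma optLen_le {ℓ : ℕ} {ε : (Fin n → ZMod 2) → (Fin ℓ → ZMod 2)} (h : IsIndexCode G ε) :
    optLen G ≤ ℓ :=
  Nat.sInf_le ⟨ε, h⟩

lemma exists_isIndexCode_optLen (G : Fin n → Fin n → Prop) :
    ∃ ε : (Fin n → ZMod 2) → (Fin (optLen G) → ZMod 2), IsIndexCode G ε :=
  Nat.sInf_mem (s := {ℓ | ∃ ε : (Fin n → ZMod 2) → (Fin ℓ → ZMod 2), IsIndexCode G ε})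
    ⟨n, id, fun i => ⟨fun y _ => y i, fun _ => rfl⟩⟩

lemma minrank_le_rank {M : Matrix (Fin n) (Fin n) (ZMod 2)} (h : Fits G M) :
    minrank G ≤ M.rank :=
  Nat.sInf_le ⟨M, h.1, h.2, rfl⟩

lemma exists_fits_rank_eq_minrank (G : Fin n → Fin n → Prop) :
    ∃ M, Fits G M ∧ M.rank = minrank G := by
  obtain ⟨M, hdiag, hoff, hrank⟩ := Nat.sInf_mem
    (s := {r : ℕ | ∃ M : Matrix (Fin n) (Fin n) (ZMod 2),
      (∀ i, M i i = 1) ∧ (∀ i j, i ≠ j → ¬ G i j → M i j = 0) ∧ M.rank = r})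
    ⟨(1 : Matrix (Fin n) (Fin n) (ZMod 2)).rank, 1, fun i => one_apply_eq i,
      fun _ _ hij _ => one_apply_ne hij, rfl⟩
  exact ⟨M, ⟨hdiag, hoff⟩, hrank⟩

lemma acyclicOn_empty : AcyclicOn G ∅ := by
  intro i h
  obtain ⟨b, hb, -⟩ := Relation.TransGen.head'_iff.1 h
  simp at hb

lemma card_le_mais {S : Finset (Fin n)} (h : AcyclicOn G S) : #S ≤ mais G :=
  le_csSup ⟨n, by rintro _ ⟨T, rfl, -⟩; simpa using T.card_le_univ⟩ ⟨S, rfl, h⟩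

lemma mais_le {k : ℕ} (h : ∀ S, AcyclicOn G S → #S ≤ k) : mais G ≤ k :=
  csSup_le ⟨0, ∅, rfl, acyclicOn_empty⟩ (by rintro _ ⟨S, rfl, hS⟩; exact h S hS)

lemma AcyclicOn.exists_sink {S D : Finset (Fin n)} (hS : AcyclicOn G S) (hDS : D ⊆ S)
    (hD : D.Nonempty) : ∃ i ∈ D, ∀ j ∈ D, ¬ G i j := by
  let R : Fin n → Fin n → Prop :=
    fun j i => Relation.TransGen (fun a b => G a b ∧ a ∈ S ∧ b ∈ S) i j
  have : IsTrans (Fin n) R := ⟨fun _ _ _ hab hbc => hbc.trans hab⟩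
  have : Std.Irrefl R := ⟨hS⟩
  obtain ⟨i, hi, hmin⟩ := (Finite.wellFounded_of_trans_of_irrefl R).has_min (D : Set (Fin n)) hD
  exact ⟨i, hi, fun j hj hij => hmin j hj (.single ⟨hij, hDS hi, hDS hj⟩)⟩

lemma AcyclicOn.insert_of_source {S : Finset (Fin n)} {v : Fin n} (hS : AcyclicOn G S)
    (hv : ∀ j ∈ insert v S, ¬ G j v) : AcyclicOn G (insert v S) := by
  have key : ∀ x y, Relation.TransGen (fun a b => G a b ∧ a ∈ insert v S ∧ b ∈ insert v S) x y →
      y ≠ v ∧ (x ≠ v → Relation.TransGen (fun a b => G a b ∧ a ∈ S ∧ b ∈ S) x y) := by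
    intro x y h
    induction h with
    | single hxy =>
      have hy : _ ≠ v := fun h => hv _ hxy.2.1 (h ▸ hxy.1)
      exact ⟨hy, fun hx => .single ⟨hxy.1, mem_of_mem_insert_of_ne hxy.2.1 hx,
        mem_of_mem_insert_of_ne hxy.2.2 hy⟩⟩
    | tail _ hbc ih =>
      have hc : _ ≠ v := fun h => hv _ hbc.2.1 (h ▸ hbc.1)
      exact ⟨hc, fun hx => (ih.2 hx).tail ⟨hbc.1, mem_of_mem_insert_of_ne hbc.2.1 ih.1,
        mem_of_mem_insert_of_ne hbc.2.2 hc⟩⟩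
  intro i hi
  obtain ⟨hiv, hcyc⟩ := key i i hi
  exact hS i (hcyc hiv)

lemma acyclicOn_singleton {v : Fin n} (hv : ¬ G v v) : AcyclicOn G {v} :=
  acyclicOn_empty.insert_of_source (by simpa using hv)

lemma acyclicOn_pair (hG : ∀ i, ¬ G i i) {a b : Fin n} (h : ¬ Digon G a b) :
    AcyclicOn G {a, b} := by
  by_cases hba : G b a
  · rw [pair_comm]
    exact (acyclicOn_singleton (hG a)).insert_of_source (by simp_all)
  · exact (acyclicOn_singleton (hG b)).insert_of_source (by simp_all)

lemma digon_or_cycle3_of_not_acyclicOn (hG : ∀ i, ¬ G i i) {x y z : Fin n}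
    (h : ¬ AcyclicOn G {x, y, z}) :
    Digon G x y ∨ Digon G x z ∨ Digon G y z ∨ (G x y ∧ G y z ∧ G z x) ∨
      (G x z ∧ G z y ∧ G y x) := by
  contrapose! h
  obtain ⟨hxy, hxz, hyz, h₁, h₂⟩ := h
  have hsource : (¬ G y x ∧ ¬ G z x) ∨ (¬ G x y ∧ ¬ G z y) ∨ (¬ G x z ∧ ¬ G y z) := by
    grind
  rcases hsource with hx | hy | hz
  · exact (acyclicOn_pair hG hyz).insert_of_source (by simp [*])
  · rw [insert_comm]
    exact (acyclicOn_pair hG hxz).insert_of_source (by simp [*])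
  · rw [show ({x, y, z} : Finset (Fin n)) = {z, x, y} by
      ext; simp only [mem_insert, mem_singleton]; tauto]
    exact (acyclicOn_pair hG hxy).insert_of_source (by simp [*])

lemma one_le_mais (hG : ∀ i, ¬ G i i) (i : Fin n) : 1 ≤ mais G := by
  simpa using card_le_mais (acyclicOn_singleton (hG i))

lemma AcyclicOn.card_le_of_isIndexCode {S : Finset (Fin n)} {ℓ : ℕ}
    {ε : (Fin n → ZMod 2) → (Fin ℓ → ZMod 2)} (hS : AcyclicOn G S) (hε : IsIndexCode G ε) :
    #S ≤ ℓ := by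
  classical
  let extend : (S → ZMod 2) → (Fin n → ZMod 2) := fun z j => if h : j ∈ S then z ⟨j, h⟩ else 0
  have hinj : Function.Injective (ε ∘ extend) := by
    intro z z' heq
    by_contra hne
    obtain ⟨j₀, hj₀⟩ := Function.ne_iff.1 hne
    let D := S.filter fun j => extend z j ≠ extend z' j
    have hD : D.Nonempty := ⟨j₀, mem_filter.2 ⟨j₀.2, by simpa [extend] using hj₀⟩⟩
    obtain ⟨i, hiD, hsink⟩ := hS.exists_sink (filter_subset _ _) hD
    obtain ⟨δ, hδ⟩ := hε i
    have hside : (fun j : {j // G i j} => extend z j.1) = fun j => extend z' j.1 := by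
      funext j
      by_contra hj
      have hjS : j.1 ∈ S := by by_contra hjS; simp [extend, hjS] at hj
      exact hsink j (mem_filter.2 ⟨hjS, hj⟩) j.2
    apply (mem_filter.1 hiD).2
    rw [← hδ (extend z), ← hδ (extend z'), hside]
    exact congrArg (δ · _) heq
  have hcard := Fintype.card_le_of_injective _ hinj
  simp only [Fintype.card_fun, Fintype.card_coe, ZMod.card, Fintype.card_fin] at hcard
  exact (Nat.pow_le_pow_iff_right (by norm_num)).1 hcard

lemma mais_le_optLen : mais G ≤ optLen G := by
  obtain ⟨ε, hε⟩ := exists_isIndexCode_optLen G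
  exact mais_le fun S hS => hS.card_le_of_isIndexCode hε

lemma isIndexCode_mulVec {k : ℕ} (A : Matrix (Fin n) (Fin k) (ZMod 2))
    (B : Matrix (Fin k) (Fin n) (ZMod 2)) (h : Fits G (A * B)) :
    IsIndexCode G (B *ᵥ ·) := by
  classical
  intro i
  obtain ⟨N, hN⟩ : ∃ N : Matrix (Fin n) (Fin n) (ZMod 2), A * B = 1 + N := ⟨A * B - 1, by abel⟩
  refine ⟨fun y s => (A *ᵥ y) i - ∑ j : {j // G i j}, N i j * s j, fun x => ?_⟩
  have hoff : ∀ j, ¬ G i j → N i j * x j = 0 := by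
    intro j hj
    rcases eq_or_ne i j with rfl | hij
    · exact mul_eq_zero_of_left (by simpa [hN] using h.1 i) _
    · exact mul_eq_zero_of_left (by simpa [hN, one_apply_ne hij] using h.2 i j hij hj) _
  have hside : (N *ᵥ x) i = ∑ j : {j // G i j}, N i j * x j := by
    rw [mulVec, dotProduct, ← Fintype.sum_subtype_add_sum_subtype (G i),
      Fintype.sum_eq_zero (fun j : {j // ¬ G i j} => N i j * x j) fun j => hoff j.1 j.2,
      add_zero]
  simp [mulVec_mulVec, hN, add_mulVec, hside]

lemma Matrix.exists_rank_factorization {K : Type*} [Field K] {m n : Type*} [Fintype m]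
    [Fintype n] (M : Matrix m n K) :
    ∃ (A : Matrix m (Fin M.rank) K) (B : Matrix (Fin M.rank) n K), A * B = M := by
  let V := Submodule.span K (Set.range M.row)
  let b := Module.finBasisOfFinrankEq K V M.rank_eq_finrank_span_row.symm
  have hrow (i : m) : M i ∈ V := Submodule.subset_span ⟨i, rfl⟩
  refine ⟨Matrix.of fun i => b.repr ⟨M i, hrow i⟩, Matrix.of fun k => (b k : n → K), ?_⟩
  ext i j
  have := congrArg (fun v : V => (v : n → K) j) (b.sum_repr ⟨M i, hrow i⟩)
  simp only [mul_apply, of_apply]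
  simpa only [Submodule.coe_sum, Submodule.coe_smul, Finset.sum_apply, Pi.smul_apply,
    smul_eq_mul] using this

lemma optLen_le_minrank : optLen G ≤ minrank G := by
  obtain ⟨M, hM, hrank⟩ := exists_fits_rank_eq_minrank G
  obtain ⟨A, B, hAB⟩ := M.exists_rank_factorization
  rw [← hAB] at hM
  exact hrank ▸ optLen_le (isIndexCode_mulVec A B hM)

lemma minrank_le_of_fits_mul {k : ℕ} (A : Matrix (Fin n) (Fin k) (ZMod 2))
    (B : Matrix (Fin k) (Fin n) (ZMod 2)) (h : Fits G (A * B)) : minrank G ≤ k :=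
  (minrank_le_rank h).trans ((A.rank_mul_le_left B).trans A.rank_le_width)

lemma minrank_le_of_cliqueCover {k : ℕ} (c : Fin n → Fin k)
    (hc : ∀ i j, i ≠ j → c i = c j → G i j) : minrank G ≤ k := by
  refine minrank_le_of_fits_mul (Matrix.of fun i t => if c i = t then 1 else 0)
    (Matrix.of fun t j => if c j = t then 1 else 0) ⟨fun i => by simp [mul_apply], ?_⟩
  intro i j hij hG
  have : c i ≠ c j := fun h => hG (hc i j hij h)
  simp [mul_apply, this]

lemma minrank_le_card : minrank G ≤ n :=
  minrank_le_of_cliqueCover id fun _ _ hij h => absurd h hij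

lemma minrank_le_minrank_comp (e : Fin n ≃ Fin n) :
    minrank G ≤ minrank (fun i j => G (e i) (e j)) := by
  obtain ⟨M, hM, hrank⟩ := exists_fits_rank_eq_minrank fun i j => G (e i) (e j)
  rw [← hrank, ← M.rank_submatrix e.symm e.symm]
  exact minrank_le_rank ⟨fun i => hM.1 _, fun i j hij hG =>
    hM.2 _ _ (e.symm.injective.ne hij) (by simpa using hG)⟩

lemma Matrix.rank_le_pred_of_mulVec_eq_zero {K : Type*} [Field K] {m : Type*}
    {M : Matrix m (Fin n) K} {v : Fin n → K} (hv : v ≠ 0) (h : M *ᵥ v = 0) :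
    M.rank ≤ n - 1 := by
  have hker : 1 ≤ Module.finrank K (LinearMap.ker M.mulVecLin) :=
    Submodule.one_le_finrank_iff.2 fun hbot =>
      hv ((Submodule.mem_bot K).1 (hbot ▸ (LinearMap.mem_ker.2 h : v ∈ LinearMap.ker M.mulVecLin)))
  have := M.mulVecLin.finrank_range_add_finrank_ker
  rw [Module.finrank_fin_fun] at this
  unfold Matrix.rank
  omega

lemma exists_successor_of_not_acyclicOn (h : ¬ AcyclicOn G univ) :
    ∃ S : Finset (Fin n), S.Nonempty ∧ ∃ σ : Fin n → Fin n, ∀ i ∈ S, σ i ∈ S ∧ G i (σ i) := by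
  classical
  simp only [AcyclicOn, not_forall, not_not] at h
  obtain ⟨i₀, hi₀⟩ := h
  let S := univ.filter fun i => Relation.TransGen (fun a b => G a b ∧ a ∈ univ ∧ b ∈ univ) i i
  have hstep : ∀ i ∈ S, ∃ j ∈ S, G i j := by
    intro i hi
    obtain ⟨j, hij, hji⟩ := Relation.TransGen.head'_iff.1 (mem_filter.1 hi).2
    exact ⟨j, mem_filter.2 ⟨mem_univ j, Relation.TransGen.tail' hji hij⟩, hij.1⟩
  choose! σ hσ using hstep
  exact ⟨S, ⟨i₀, mem_filter.2 ⟨mem_univ i₀, hi₀⟩⟩, σ, hσ⟩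

lemma minrank_le_pred_of_not_acyclicOn (hG : ∀ i, ¬ G i i) (h : ¬ AcyclicOn G univ) :
    minrank G ≤ n - 1 := by
  classical
  obtain ⟨S, ⟨s, hs⟩, σ, hσ⟩ := exists_successor_of_not_acyclicOn h
  let P : Matrix (Fin n) (Fin n) (ZMod 2) :=
    Matrix.of fun i => if i ∈ S then Pi.single (σ i) 1 else 0
  let v : Fin n → ZMod 2 := fun j => if j ∈ S then 1 else 0
  have hfits : Fits G (1 + P) := by
    refine ⟨fun i => ?_, fun i j hij hGij => ?_⟩
    · by_cases hi : i ∈ S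
      · have : i ≠ σ i := fun h' => hG i (by simpa [← h'] using (hσ i hi).2)
        simp [P, hi, this]
      · simp [P, hi]
    · by_cases hi : i ∈ S
      · have : j ≠ σ i := fun h' => hGij (h' ▸ (hσ i hi).2)
        simp [P, hi, this, one_apply_ne hij]
      · simp [P, hi, one_apply_ne hij]
  -- the row `e i + e (σ i)` of a vertex `i ∈ S` has both its ones in `S`
  have hv : (1 + P) *ᵥ v = 0 := by
    rw [add_mulVec, one_mulVec]
    funext i
    by_cases hi : i ∈ S
    · simp [mulVec, P, v, hi, (hσ i hi).1, single_dotProduct]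
      decide
    · simp [mulVec, P, v, hi]
  have hv0 : v ≠ 0 := fun h' => by simpa [v, hs] using congrFun h' s
  exact (minrank_le_rank hfits).trans (rank_le_pred_of_mulVec_eq_zero hv0 hv)

end

lemma exists_forall_eq_or_eq_of_edges_meet {V : Type*} [Nonempty V] {D : V → V → Prop}
    (hsymm : ∀ x y, D x y → D y x)
    (hmeet : ∀ a b c d, D a b → D c d → a = c ∨ a = d ∨ b = c ∨ b = d)
    (htri : ∀ a b c, D a b → D b c → ¬ D a c) :
    ∃ p, ∀ x y, D x y → x = p ∨ y = p := by
  by_cases hD : ∀ x y, ¬ D x y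
  · exact ⟨Classical.arbitrary V, fun x y h => absurd h (hD x y)⟩
  push Not at hD
  obtain ⟨x, y, hxy⟩ := hD
  by_cases hx : ∀ s t, D s t → s = x ∨ t = x
  · exact ⟨x, hx⟩
  push Not at hx
  obtain ⟨u, v, huv, hux, hvx⟩ := hx
  obtain ⟨w, hyw, hwx⟩ : ∃ w, D y w ∧ w ≠ x := by
    rcases hmeet x y u v hxy huv with h | h | rfl | rfl
    · exact absurd h.symm hux
    · exact absurd h.symm hvx
    · exact ⟨v, huv, hvx⟩
    · exact ⟨u, hsymm _ _ huv, hux⟩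
  -- an edge avoiding `y` meets both `x y` and `y w`, so it is `x w` and closes a triangle
  refine ⟨y, fun s t hst => ?_⟩
  by_contra hy
  push Not at hy
  have hxw : D x w := by
    have := hsymm s t hst
    have := hmeet x y s t hxy hst
    have := hmeet y w s t hyw hst
    grind
  exact htri x y w hxy hyw hxw

section FourVertices

variable {G : Fin 4 → Fin 4 → Prop}

lemma exists_equiv_fin_four {a b c d : Fin 4} (hab : a ≠ b) (hac : a ≠ c) (had : a ≠ d)
    (hbc : b ≠ c) (hbd : b ≠ d) (hcd : c ≠ d) :
    ∃ e : Fin 4 ≃ Fin 4, e 0 = a ∧ e 1 = b ∧ e 2 = c ∧ e 3 = d := by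
  have hinj : Function.Injective ![a, b, c, d] := by
    intro i j h
    fin_cases i <;> fin_cases j <;> simp_all [eq_comm]
  exact ⟨Equiv.ofBijective _ (Finite.injective_iff_bijective.1 hinj), rfl, rfl, rfl, rfl⟩

lemma minrank_le_two_of_disjoint_digons (e : Fin 4 ≃ Fin 4) (h₀₁ : Digon G (e 0) (e 1))
    (h₂₃ : Digon G (e 2) (e 3)) : minrank G ≤ 2 := by
  refine (minrank_le_minrank_comp e).trans (minrank_le_of_cliqueCover ![0, 0, 1, 1] ?_)
  intro i j hij hc
  fin_cases i <;> fin_cases j <;> simp_all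

lemma minrank_le_two_of_bidirected_triangle (e : Fin 4 ≃ Fin 4) (h₀₁ : Digon G (e 0) (e 1))
    (h₀₂ : Digon G (e 0) (e 2)) (h₁₂ : Digon G (e 1) (e 2)) : minrank G ≤ 2 := by
  refine (minrank_le_minrank_comp e).trans (minrank_le_of_cliqueCover ![0, 0, 0, 1] ?_)
  intro i j hij hc
  fin_cases i <;> fin_cases j <;> simp_all

lemma minrank_le_two_of_two_spokes (e : Fin 4 ≃ Fin 4) (h₀₁ : Digon G (e 0) (e 1))
    (h₀₂ : Digon G (e 0) (e 2)) (hc : G (e 1) (e 2) ∧ G (e 2) (e 3) ∧ G (e 3) (e 1)) :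
    minrank G ≤ 2 := by
  -- rows: the indicators of `{0, 1, 2}` (twice) and `{0, 2, 3}`, and their sum `{1, 3}`
  refine (minrank_le_minrank_comp e).trans
    (minrank_le_of_fits_mul !![1, 0; 1, 0; 0, 1; 1, 1] !![1, 1, 1, 0; 1, 0, 1, 1] ⟨by decide, ?_⟩)
  intro i j hij hG
  fin_cases i <;> fin_cases j <;> first | decide | simp_all

lemma minrank_le_two_of_one_spoke (e : Fin 4 ≃ Fin 4) (h₀₁ : Digon G (e 0) (e 1))
    (hc : G (e 1) (e 2) ∧ G (e 2) (e 3) ∧ G (e 3) (e 1)) (h₃₀ : G (e 3) (e 0))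
    (h₀₂ : G (e 0) (e 2)) : minrank G ≤ 2 := by
  -- rows: the indicators of `{0, 1, 2}` (twice) and `{2, 3}`, and their sum `{0, 1, 3}`
  refine (minrank_le_minrank_comp e).trans
    (minrank_le_of_fits_mul !![1, 0; 1, 0; 0, 1; 1, 1] !![1, 1, 1, 0; 0, 0, 1, 1] ⟨by decide, ?_⟩)
  intro i j hij hG
  fin_cases i <;> fin_cases j <;> first | decide | simp_all

lemma arcs_of_not_acyclicOn (hG : ∀ i, ¬ G i i) {p b c : Fin 4} (h : ¬ AcyclicOn G {p, b, c})
    (hbc : G b c) (hcb : ¬ Digon G b c) (hpb : ¬ Digon G p b) (hpc : ¬ Digon G p c) :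
    G p b ∧ G c p := by
  rcases digon_or_cycle3_of_not_acyclicOn hG h with h | h | h | h | h
  · exact absurd h hpb
  · exact absurd h hpc
  · exact absurd h hcb
  · exact ⟨h.1, h.2.2⟩
  · exact absurd ⟨hbc, h.2.1⟩ hcb

/-- The cycle `1 ↦ 2 ↦ 3 ↦ 1`, fixing `0`. -/
def rotateSpokes : Equiv.Perm (Fin 4) := (Equiv.swap 1 2).trans (Equiv.swap 1 3)

lemma minrank_le_two_of_spoke (hG : ∀ i, ¬ G i i)
    (hT : ∀ x y z, x ≠ y → x ≠ z → y ≠ z → ¬ AcyclicOn G {x, y, z}) (e : Fin 4 ≃ Fin 4)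
    (hhub : ∀ x y, Digon G x y → x = e 0 ∨ y = e 0)
    (hc : G (e 1) (e 2) ∧ G (e 2) (e 3) ∧ G (e 3) (e 1)) (h₀₁ : Digon G (e 0) (e 1)) :
    minrank G ≤ 2 := by
  by_cases h₀₂ : Digon G (e 0) (e 2)
  · exact minrank_le_two_of_two_spokes e h₀₁ h₀₂ hc
  by_cases h₀₃ : Digon G (e 0) (e 3)
  · exact minrank_le_two_of_two_spokes (rotateSpokes.symm.trans e) h₀₃ h₀₁ ⟨hc.2.2, hc.1, hc.2.1⟩
  have h₂₃ : ¬ Digon G (e 2) (e 3) := fun h => by simpa using hhub _ _ h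
  obtain ⟨h₀₂', h₃₀⟩ := arcs_of_not_acyclicOn hG (hT _ _ _ (by simp) (by simp) (by simp))
    hc.2.1 h₂₃ h₀₂ h₀₃
  exact minrank_le_two_of_one_spoke e h₀₁ hc h₃₀ h₀₂'

lemma minrank_le_two_of_hub_cycle3 (hG : ∀ i, ¬ G i i)
    (hT : ∀ x y z, x ≠ y → x ≠ z → y ≠ z → ¬ AcyclicOn G {x, y, z}) (e : Fin 4 ≃ Fin 4)
    (hhub : ∀ x y, Digon G x y → x = e 0 ∨ y = e 0)
    (hc : G (e 1) (e 2) ∧ G (e 2) (e 3) ∧ G (e 3) (e 1)) : minrank G ≤ 2 := by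
  by_cases h₀₁ : Digon G (e 0) (e 1)
  · exact minrank_le_two_of_spoke hG hT e hhub hc h₀₁
  by_cases h₀₂ : Digon G (e 0) (e 2)
  · exact minrank_le_two_of_spoke hG hT (rotateSpokes.trans e) hhub ⟨hc.2.1, hc.2.2, hc.1⟩ h₀₂
  by_cases h₀₃ : Digon G (e 0) (e 3)
  · exact minrank_le_two_of_spoke hG hT (rotateSpokes.symm.trans e) hhub
      ⟨hc.2.2, hc.1, hc.2.1⟩ h₀₃
  -- without spokes, the triples through the hub force the arcs `e 0 → e 3 → e 0`
  have hfree : ∀ i j : Fin 4, i ≠ 0 → j ≠ 0 → ¬ Digon G (e i) (e j) := fun i j hi hj h => by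
    simpa [hi, hj] using hhub _ _ h
  have h₂₃ := arcs_of_not_acyclicOn hG (hT (e 0) (e 2) (e 3) (by simp) (by simp) (by simp))
    hc.2.1 (hfree 2 3 (by decide) (by decide)) h₀₂ h₀₃
  have h₃₁ := arcs_of_not_acyclicOn hG (hT (e 0) (e 3) (e 1) (by simp) (by simp) (by simp))
    hc.2.2 (hfree 3 1 (by decide) (by decide)) h₀₃ h₀₁
  exact absurd ⟨h₃₁.1, h₂₃.2⟩ h₀₃

lemma minrank_le_two_of_hub (hG : ∀ i, ¬ G i i)
    (hT : ∀ x y z, x ≠ y → x ≠ z → y ≠ z → ¬ AcyclicOn G {x, y, z}) (p : Fin 4)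
    (hhub : ∀ x y, Digon G x y → x = p ∨ y = p) : minrank G ≤ 2 := by
  let e := Equiv.swap 0 p
  replace hhub : ∀ x y, Digon G x y → x = e 0 ∨ y = e 0 := by simpa [e] using hhub
  rcases digon_or_cycle3_of_not_acyclicOn hG
      (hT (e 1) (e 2) (e 3) (by simp) (by simp) (by simp)) with h | h | h | hc | hc
  · exact absurd (hhub _ _ h) (by simp)
  · exact absurd (hhub _ _ h) (by simp)
  · exact absurd (hhub _ _ h) (by simp)
  · exact minrank_le_two_of_hub_cycle3 hG hT e hhub hc
  · exact minrank_le_two_of_hub_cycle3 hG hT ((Equiv.swap 2 3).trans e) hhub hc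

lemma minrank_le_two (hG : ∀ i, ¬ G i i)
    (hT : ∀ x y z, x ≠ y → x ≠ z → y ≠ z → ¬ AcyclicOn G {x, y, z}) : minrank G ≤ 2 := by
  by_cases hmeet : ∀ a b c d, Digon G a b → Digon G c d → a = c ∨ a = d ∨ b = c ∨ b = d
  swap
  · push Not at hmeet
    obtain ⟨a, b, c, d, hab, hcd, hac, had, hbc, hbd⟩ := hmeet
    obtain ⟨e, rfl, rfl, rfl, rfl⟩ :=
      exists_equiv_fin_four (hab.ne hG) hac had hbc hbd (hcd.ne hG)
    exact minrank_le_two_of_disjoint_digons e hab hcd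
  by_cases htri : ∃ a b c, Digon G a b ∧ Digon G a c ∧ Digon G b c
  · obtain ⟨a, b, c, hab, hac, hbc⟩ := htri
    have hfourth : ∀ a b c : Fin 4, ∃ d, a ≠ d ∧ b ≠ d ∧ c ≠ d := by decide
    obtain ⟨d, had, hbd, hcd⟩ := hfourth a b c
    obtain ⟨e, rfl, rfl, rfl, rfl⟩ :=
      exists_equiv_fin_four (hab.ne hG) (hac.ne hG) had (hbc.ne hG) hbd hcd
    exact minrank_le_two_of_bidirected_triangle e hab hac hbc
  push Not at htri
  obtain ⟨p, hp⟩ := exists_forall_eq_or_eq_of_edges_meet (fun _ _ h => ⟨h.2, h.1⟩) hmeet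
    fun a b c hab hbc hac => htri a b c hab hac hbc
  exact minrank_le_two_of_hub hG hT p hp

end FourVertices

lemma minrank_le_mais_of_le_four {n : ℕ} {G : Fin n → Fin n → Prop} (hn : n ≤ 4)
    (hG : ∀ i, ¬ G i i) : minrank G ≤ mais G := by
  obtain h | ⟨h, hn0⟩ | ⟨rfl, h⟩ :
      n - 1 ≤ mais G ∨ (mais G ≤ 1 ∧ 0 < n) ∨ (n = 4 ∧ mais G = 2) := by omega
  · by_cases hac : AcyclicOn G univ
    · have hcard := card_le_mais hac
      rw [card_univ, Fintype.card_fin] at hcard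
      exact minrank_le_card.trans hcard
    · exact (minrank_le_pred_of_not_acyclicOn hG hac).trans h
  · have hcomplete : ∀ i j, i ≠ j → G i j := fun i j hij => by
      by_contra hGij
      have := card_le_mais (acyclicOn_pair hG (a := j) (b := i) fun hd => hGij hd.2)
      rw [card_pair hij.symm] at this
      omega
    calc minrank G ≤ 1 := minrank_le_of_cliqueCover (fun _ => (0 : Fin 1)) fun i j hij _ =>
          hcomplete i j hij
      _ ≤ mais G := one_le_mais hG ⟨0, hn0⟩
  · refine (minrank_le_two hG fun x y z hxy hxz hyz hac => ?_).trans h.ge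
    have := card_le_mais hac
    rw [card_eq_three.2 ⟨x, y, z, hxy, hxz, hyz, rfl⟩] at this
    omega

/-- For every side-information digraph with at most 4 vertices,
`ℓ*(G) = mais G = minrank G`. -/
theorem stmt9 {n : ℕ} (hn : n ≤ 4) (G : Fin n → Fin n → Prop) (hG : ∀ i, ¬ G i i) :
    optLen G = mais G ∧ mais G = minrank G := by
  have h₁ : mais G ≤ optLen G := mais_le_optLen
  have h₂ : optLen G ≤ minrank G := optLen_le_minrank
  have h₃ : minrank G ≤ mais G := minrank_le_mais_of_le_four hn hG
  exact ⟨by omega, by omega⟩
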